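/- Let γ₁ ≤ γ₂ and σ > 0. With f(t) = t·Φ(t/σ) + (σ/√(2π))·exp(−t²/(2σ²)), the minimal population hinge loss over b for the classifier with w = +1 on the balanced Gaussian mixture equals f((γ₁−γ₂+2)/2), the minimal population hinge loss for w = −1 equals f((γ₂−γ₁+2)/2), and consequently min_b L(h_{1,b}; μ_c) ≤ min_b L(h_{−1,b}; μ_c). -/

import Mathlib

open MeasureTheory ProbabilityTheory

/-- CDF of the standard normal distribution `N(0,1)`. -/
noncomputable def Phi (x : ℝ) : ℝ := ((gaussianReal 0 1) (Set.Iic x)).toReal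

/-- `f(t) = t·Φ(t/σ) + (σ/√(2π))·exp(−t²/(2σ²))`. -/
noncomputable def fGap (σ t : ℝ) : ℝ :=
  t * Phi (t / σ) + (σ / Real.sqrt (2 * Real.pi)) * Real.exp (-(t ^ 2) / (2 * σ ^ 2))

/-- The balanced 1-D Gaussian mixture: label `-1` with `x ~ N(γ₁, σ²)`,
label `+1` with `x ~ N(γ₂, σ²)`, each with probability `1/2`. -/
noncomputable def gaussMixBal (γ₁ γ₂ σ : ℝ) : Measure (ℝ × ℝ) :=
  ENNReal.ofReal (1 / 2) • ((gaussianReal γ₁ (Real.toNNReal (σ ^ 2))).map (fun x => (x, -1))) +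
  ENNReal.ofReal (1 / 2) • ((gaussianReal γ₂ (Real.toNNReal (σ ^ 2))).map (fun x => (x, 1)))

/-- Population hinge loss (λ = 0) of the linear classifier `h_{w,b}` under `μ`. -/
noncomputable def hingeLoss (w b : ℝ) (μ : Measure (ℝ × ℝ)) : ℝ :=
  ∫ z, max 0 (1 - z.2 * (w * z.1 + b)) ∂μ

/-!
If `X ~ N(0, σ²)` then `fGap σ t = E[max 0 (t + X)]`: splitting at `X = -t`, the constant part
contributes `t Φ(t/σ)`, and since `-σ² φ` is an antiderivative of `x φ(x)` for the density `φ`,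
the linear part contributes `σ² φ(-t)`. For `w = ±1` the hinge loss of `h_{w,b}` is the average of
`fGap σ (1 + w γ₁ + b)` and `fGap σ (1 - w γ₂ - b)`. As an expectation of convex nondecreasing
functions of `t`, `fGap σ` is convex and monotone; convexity puts the minimum over `b` at the
midpoint of the two arguments, and monotonicity compares the two minima.
-/

open Set Filter Topology
open scoped NNReal

lemma hasDerivAt_gaussianPDFReal (μ : ℝ) (v : ℝ≥0) (x : ℝ) :
    HasDerivAt (gaussianPDFReal μ v) (-((x - μ) / v) * gaussianPDFReal μ v x) x := by
  rcases eq_or_ne v 0 with rfl | hv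
  · simp
  have hexponent : HasDerivAt (fun y => -(y - μ) ^ 2 / (2 * (v : ℝ))) (-((x - μ) / v)) x := by
    refine ((((hasDerivAt_id x).sub_const μ).pow 2).neg.div_const _).congr_deriv ?_
    field_simp [NNReal.coe_ne_zero.mpr hv]
    simp
  rw [gaussianPDFReal_def]
  exact (hexponent.exp.const_mul _).congr_deriv (by ring)

lemma integrable_id_gaussianReal (μ : ℝ) (v : ℝ≥0) :
    Integrable (fun x => x) (gaussianReal μ v) :=
  memLp_one_iff_integrable.mp (memLp_id_gaussianReal 1)

lemma integrable_gaussianPDFReal_mul_id (μ : ℝ) {v : ℝ≥0} (hv : v ≠ 0) :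
    Integrable fun x => gaussianPDFReal μ v x * x := by
  have h := integrable_id_gaussianReal μ v
  rw [gaussianReal_of_var_ne_zero _ hv, integrable_withDensity_iff_integrable_smul'
    (measurable_gaussianPDF μ v) (ae_of_all _ fun _ => gaussianPDF_lt_top)] at h
  simpa only [toReal_gaussianPDF, smul_eq_mul] using h

lemma setIntegral_Ici_id_gaussianReal {v : ℝ≥0} (hv : v ≠ 0) (a : ℝ) :
    ∫ x in Ici a, x ∂gaussianReal 0 v = v * gaussianPDFReal 0 v a := by
  have hint := integrable_gaussianPDFReal_mul_id 0 hv
  have hderiv : ∀ x, HasDerivAt (fun y => -(v : ℝ) * gaussianPDFReal 0 v y)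
      (gaussianPDFReal 0 v x * x) x := fun x => by
    refine ((hasDerivAt_gaussianPDFReal 0 v x).const_mul _).congr_deriv ?_
    field_simp [NNReal.coe_ne_zero.mpr hv]
    ring
  have hlim : Tendsto (fun y => -(v : ℝ) * gaussianPDFReal 0 v y) atTop (𝓝 0) :=
    tendsto_zero_of_hasDerivAt_of_integrableOn_Ioi (a := a) (fun x _ => hderiv x)
      hint.integrableOn ((integrable_gaussianPDFReal 0 v).const_mul _).integrableOn
  rw [gaussianReal_of_var_ne_zero _ hv, setIntegral_withDensity_eq_setIntegral_toReal_smul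
    (measurable_gaussianPDF 0 v) (ae_of_all _ fun _ => gaussianPDF_lt_top) _ measurableSet_Ici,
    integral_Ici_eq_integral_Ioi]
  simp only [toReal_gaussianPDF, smul_eq_mul]
  rw [integral_Ioi_of_hasDerivAt_of_tendsto' (fun x _ => hderiv x) hint.integrableOn hlim]
  ring

section MaxZeroAdd

variable {μ : Measure ℝ} [IsFiniteMeasure μ]

lemma integrable_max_zero_add_mul (hμ : Integrable (fun x => x) μ) (c w : ℝ) :
    Integrable (fun x => max 0 (c + w * x)) μ :=
  (integrable_const 0).sup ((integrable_const c).add (hμ.const_mul w))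

lemma monotone_integral_max_zero_add (hμ : Integrable (fun x => x) μ) :
    Monotone fun t => ∫ x, max 0 (t + x) ∂μ := fun s t hst =>
  integral_mono (by simpa using integrable_max_zero_add_mul hμ s 1)
    (by simpa using integrable_max_zero_add_mul hμ t 1) fun x => max_le_max le_rfl (by linarith)

lemma convexOn_integral_max_zero_add (hμ : Integrable (fun x => x) μ) :
    ConvexOn ℝ univ fun t => ∫ x, max 0 (t + x) ∂μ := by
  have hint : ∀ t, Integrable (fun x => max 0 (t + x)) μ := fun t => by
    simpa using integrable_max_zero_add_mul hμ t 1
  refine ⟨convex_univ, fun s _ t _ a b ha hb hab => ?_⟩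
  simp only [smul_eq_mul]
  rw [← integral_const_mul, ← integral_const_mul,
    ← integral_add ((hint s).const_mul a) ((hint t).const_mul b)]
  refine integral_mono (hint _) (((hint s).const_mul a).add ((hint t).const_mul b)) fun x => ?_
  have hx : x = a * x + b * x := by rw [← add_mul, hab, one_mul]
  refine max_le (add_nonneg (mul_nonneg ha (le_max_left _ _)) (mul_nonneg hb (le_max_left _ _))) ?_
  nlinarith [mul_le_mul_of_nonneg_left (le_max_right 0 (s + x)) ha,
    mul_le_mul_of_nonneg_left (le_max_right 0 (t + x)) hb]

end MaxZeroAdd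

lemma ConvexOn.isLeast_range_avg_add_sub {f : ℝ → ℝ} (hf : ConvexOn ℝ univ f) (p q : ℝ) :
    IsLeast (range fun b => (f (p + b) + f (q - b)) / 2) (f ((p + q) / 2)) := by
  refine ⟨⟨(q - p) / 2, ?_⟩, ?_⟩
  · dsimp only
    rw [show p + (q - p) / 2 = (p + q) / 2 by ring, show q - (q - p) / 2 = (p + q) / 2 by ring]
    ring
  · rintro _ ⟨b, rfl⟩
    dsimp only
    calc f ((p + q) / 2) = f ((1 / 2 : ℝ) • (p + b) + (1 / 2 : ℝ) • (q - b)) := by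
          rw [smul_eq_mul, smul_eq_mul]; ring_nf
      _ ≤ (1 / 2 : ℝ) • f (p + b) + (1 / 2 : ℝ) • f (q - b) :=
          hf.2 (mem_univ _) (mem_univ _) (by norm_num) (by norm_num) (by norm_num)
      _ = (f (p + b) + f (q - b)) / 2 := by rw [smul_eq_mul, smul_eq_mul]; ring

section Gaussian

variable {σ : ℝ}

lemma measureReal_Ici_neg_gaussianReal (hσ : 0 < σ) (t : ℝ) :
    (gaussianReal 0 (σ ^ 2).toNNReal).real (Ici (-t)) = Phi (t / σ) := by
  have hmap : (gaussianReal 0 1).map (-σ * ·) = gaussianReal 0 (σ ^ 2).toNNReal := by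
    rw [gaussianReal_map_const_mul, mul_zero, mul_one]
    congr
    rw [neg_sq, max_eq_left (sq_nonneg σ)]
  have hpreimage : (-σ * ·) ⁻¹' Ici (-t) = Iic (t / σ) := by
    ext x
    simp only [mem_preimage, mem_Ici, mem_Iic, le_div_iff₀ hσ]
    constructor <;> intro h <;> linarith
  rw [← hmap, measureReal_def, Measure.map_apply (measurable_const_mul _) measurableSet_Ici,
    hpreimage, Phi]

lemma sq_mul_gaussianPDFReal (hσ : 0 < σ) (t : ℝ) :
    σ ^ 2 * gaussianPDFReal 0 (σ ^ 2).toNNReal t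
      = σ / Real.sqrt (2 * Real.pi) * Real.exp (-(t ^ 2) / (2 * σ ^ 2)) := by
  rw [gaussianPDFReal, Real.coe_toNNReal _ (sq_nonneg σ), Real.sqrt_mul (by positivity),
    Real.sqrt_sq hσ.le, sub_zero]
  field_simp

lemma integral_max_zero_add_gaussianReal (hσ : 0 < σ) (t : ℝ) :
    ∫ x, max 0 (t + x) ∂gaussianReal 0 (σ ^ 2).toNNReal = fGap σ t := by
  have hv : (σ ^ 2).toNNReal ≠ 0 := by simp [hσ.ne']
  have hid := integrable_id_gaussianReal 0 (σ ^ 2).toNNReal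
  have hindicator : (fun x => max 0 (t + x)) = (Ici (-t)).indicator (fun x => t + x) := by
    ext x
    by_cases hx : -t ≤ x
    · simp [hx, show 0 ≤ t + x by linarith]
    · simp [hx, show t + x ≤ 0 by linarith]
  rw [hindicator, integral_indicator measurableSet_Ici,
    integral_add (integrable_const t).integrableOn hid.integrableOn, setIntegral_const,
    setIntegral_Ici_id_gaussianReal hv, Real.coe_toNNReal _ (sq_nonneg σ),
    measureReal_Ici_neg_gaussianReal hσ, sq_mul_gaussianPDFReal hσ, smul_eq_mul, mul_comm, neg_sq,
    fGap]

lemma integral_max_zero_add_mul_gaussianReal (hσ : 0 < σ) {w : ℝ} (hw : w ^ 2 = 1) (γ c : ℝ) :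
    ∫ x, max 0 (c + w * x) ∂gaussianReal γ (σ ^ 2).toNNReal = fGap σ (c + w * γ) := by
  have hmap : (gaussianReal γ (σ ^ 2).toNNReal).map (w * ·)
      = (gaussianReal 0 (σ ^ 2).toNNReal).map (· + w * γ) := by
    rw [gaussianReal_map_const_mul, gaussianReal_map_add_const, zero_add]
    congr
    ext
    simp [hw]
  have hcont : Continuous fun y : ℝ => max 0 (c + y) := by fun_prop
  calc ∫ x, max 0 (c + w * x) ∂gaussianReal γ (σ ^ 2).toNNReal
      = ∫ y, max 0 (c + y) ∂(gaussianReal 0 (σ ^ 2).toNNReal).map (· + w * γ) := by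
        rw [← hmap, integral_map (measurable_const_mul w).aemeasurable hcont.aestronglyMeasurable]
    _ = ∫ y, max 0 (c + w * γ + y) ∂gaussianReal 0 (σ ^ 2).toNNReal := by
        rw [integral_map (measurable_add_const _).aemeasurable hcont.aestronglyMeasurable]
        simp only [add_comm, add_left_comm]
    _ = fGap σ (c + w * γ) := integral_max_zero_add_gaussianReal hσ _

lemma monotone_fGap (hσ : 0 < σ) : Monotone (fGap σ) := by
  rw [← funext (integral_max_zero_add_gaussianReal hσ)]
  exact monotone_integral_max_zero_add (integrable_id_gaussianReal 0 (σ ^ 2).toNNReal)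

lemma convexOn_fGap (hσ : 0 < σ) : ConvexOn ℝ univ (fGap σ) := by
  rw [← funext (integral_max_zero_add_gaussianReal hσ)]
  exact convexOn_integral_max_zero_add (integrable_id_gaussianReal 0 (σ ^ 2).toNNReal)

lemma integral_gaussMixBal {γ₁ γ₂ : ℝ} {g : ℝ × ℝ → ℝ}
    (h₁ : Integrable (fun x => g (x, -1)) (gaussianReal γ₁ (σ ^ 2).toNNReal))
    (h₂ : Integrable (fun x => g (x, 1)) (gaussianReal γ₂ (σ ^ 2).toNNReal)) :
    ∫ z, g z ∂gaussMixBal γ₁ γ₂ σ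
      = (∫ x, g (x, -1) ∂gaussianReal γ₁ (σ ^ 2).toNNReal
          + ∫ x, g (x, 1) ∂gaussianReal γ₂ (σ ^ 2).toNNReal) / 2 := by
  have e := fun c : ℝ => measurableEmbedding_prod_mk_right (β := ℝ) c
  rw [gaussMixBal, integral_add_measure
      (((e _).integrable_map_iff.mpr h₁).smul_measure ENNReal.ofReal_ne_top)
      (((e _).integrable_map_iff.mpr h₂).smul_measure ENNReal.ofReal_ne_top),
    integral_smul_measure, integral_smul_measure, (e _).integral_map, (e _).integral_map,
    ENNReal.toReal_ofReal (by norm_num)]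
  simp only [smul_eq_mul]
  ring

lemma hingeLoss_gaussMixBal (hσ : 0 < σ) {w : ℝ} (hw : w ^ 2 = 1) (γ₁ γ₂ b : ℝ) :
    hingeLoss w b (gaussMixBal γ₁ γ₂ σ)
      = (fGap σ (1 + w * γ₁ + b) + fGap σ (1 - w * γ₂ - b)) / 2 := by
  have hw' : (-w) ^ 2 = 1 := by rwa [neg_sq]
  have hneg : ∀ x : ℝ, 1 - -1 * (w * x + b) = 1 + b + w * x := fun x => by ring
  have hpos : ∀ x : ℝ, 1 - 1 * (w * x + b) = 1 - b + -w * x := fun x => by ring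
  rw [hingeLoss, integral_gaussMixBal
    (by simpa only [hneg] using integrable_max_zero_add_mul (integrable_id_gaussianReal _ _) _ _)
    (by simpa only [hpos] using integrable_max_zero_add_mul (integrable_id_gaussianReal _ _) _ _)]
  simp only [hneg, hpos, integral_max_zero_add_mul_gaussianReal hσ hw,
    integral_max_zero_add_mul_gaussianReal hσ hw']
  congr 3 <;> ring

end Gaussian

theorem stmt5 (γ₁ γ₂ σ : ℝ) (hγ : γ₁ ≤ γ₂) (hσ : 0 < σ) :
    IsLeast (Set.range (fun b => hingeLoss 1 b (gaussMixBal γ₁ γ₂ σ)))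
      (fGap σ ((γ₁ - γ₂ + 2) / 2)) ∧
    IsLeast (Set.range (fun b => hingeLoss (-1) b (gaussMixBal γ₁ γ₂ σ)))
      (fGap σ ((γ₂ - γ₁ + 2) / 2)) ∧
    fGap σ ((γ₁ - γ₂ + 2) / 2) ≤ fGap σ ((γ₂ - γ₁ + 2) / 2) := by
  refine ⟨?_, ?_, monotone_fGap hσ (by linarith)⟩
  · simp only [hingeLoss_gaussMixBal hσ (one_pow 2)]
    convert (convexOn_fGap hσ).isLeast_range_avg_add_sub (1 + 1 * γ₁) (1 - 1 * γ₂) using 2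
    ring
  · simp only [hingeLoss_gaussMixBal hσ neg_one_sq]
    convert (convexOn_fGap hσ).isLeast_range_avg_add_sub (1 + -1 * γ₁) (1 - -1 * γ₂) using 2
    ring
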